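/- arXiv:1703.01577 — 2 statements merged into one kernel-verified Lean document; each statement's English description precedes it below -/
import Mathlib

section
/- If A is an infinite c.e. set, then Σ_{x ∈ A} c̲_K(x) = ∞, where c̲_K(x) = Σ_{w > x} 2^{-K(w)} is the limit of the standard cost function. -/
/-!
Applying Kraft–Chaitin to the computable requests `⟨2 ⌊log₂ (i + 1)⌋ + 2, f i⟩` gives
`2^{-K(f i)} ≥ c / (i + 1)²`. For `F = f '' {0, …, N - 1}`, `Σ_{x ∈ F} c̲_K(x)` is at least the
sum of `2^{-K(w)}` over the pairs `x < w` of elements of `F`; the pair `{f j, f i}` with `j < i`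
contributes at least `c / (i + 1)²` whichever of the two is larger, so the total is at least
`c Σ_{i < N} i / (i + 1)²`, which diverges like `log N`.
-/

/-- The limit `c̲_K(x) = Σ_{w > x} 2^{-K(w)}` of the standard cost function. -/
noncomputable def cKbar (K : ℕ → ℕ) (x : ℕ) : ℝ :=
  ∑' w : ℕ, if x < w then ((2 : ℝ)⁻¹) ^ K w else 0

open Finset Filter

theorem Nat.log_eq_findGreatest (b n : ℕ) :
    Nat.log b n = Nat.findGreatest (fun m => 1 < b ∧ b ^ m ≤ n) n := by
  refine (Nat.findGreatest_eq_iff.2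
    ⟨Nat.log_le_self b n, fun h => ?_, fun k hk _ ⟨hb, hkn⟩ => ?_⟩).symm
  · have hb : 1 < b := by
      by_contra hb
      exact h (Nat.log_of_left_le_one (not_lt.1 hb) n)
    exact ⟨hb, Nat.pow_le_of_le_log (fun hn => h (by simp [hn])) le_rfl⟩
  · exact (Nat.le_log_of_pow_le hb hkn).not_gt hk

theorem Primrec.nat_log : Primrec₂ Nat.log := by
  have hp : PrimrecRel fun (p : ℕ × ℕ) (m : ℕ) => 1 < p.1 ∧ p.1 ^ m ≤ p.2 :=
    (Primrec.nat_lt.comp (Primrec.const 1) (Primrec.fst.comp Primrec.fst)).and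
      (Primrec.nat_le.comp ((Primrec₂.unpaired'.1 Nat.Primrec.pow).comp
        (Primrec.fst.comp Primrec.fst) Primrec.snd) (Primrec.snd.comp Primrec.fst))
  exact (Primrec.nat_findGreatest Primrec.snd hp).of_eq fun p => (Nat.log_eq_findGreatest _ _).symm

theorem Finset.sum_range_sum_range_eq_diag_add_triangle {M : Type*} [AddCommMonoid M]
    (g : ℕ → ℕ → M) (N : ℕ) :
    ∑ j ∈ range N, ∑ i ∈ range N, g j i =
      ∑ i ∈ range N, (g i i + ∑ j ∈ range i, (g j i + g i j)) := by
  induction N with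
  | zero => simp
  | succ N ih =>
    simp only [sum_range_succ, sum_add_distrib] at ih ⊢
    rw [ih]
    abel

theorem sum_nsmul_le_sum_sum_ite_lt {α M : Type*} [LinearOrder α] [AddCommMonoid M]
    [PartialOrder M] [IsOrderedAddMonoid M] {a : ℕ → α} (ha : Function.Injective a) {u v : ℕ → M}
    (hu : Antitone u) (huv : u ≤ v) (N : ℕ) :
    ∑ i ∈ range N, i • u i ≤
      ∑ j ∈ range N, ∑ i ∈ range N, if a j < a i then v i else 0 := by
  rw [sum_range_sum_range_eq_diag_add_triangle]
  refine sum_le_sum fun i _ => ?_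
  have hpair : ∀ j < i,
      u i ≤ (if a j < a i then v i else 0) + if a i < a j then v j else 0 := by
    intro j hji
    rcases (ha.ne hji.ne).lt_or_gt with h | h
    · simp [h, h.not_gt, huv i]
    · simp [h, h.not_gt, (hu hji.le).trans (huv j)]
  calc i • u i = ∑ j ∈ range i, u i := by simp
    _ ≤ ∑ j ∈ range i, _ := sum_le_sum fun j hj => hpair j (mem_range.1 hj)
    _ = _ := by simp

theorem sum_ite_lt_le_cKbar {K : ℕ → ℕ} (hK : Summable fun w => (2⁻¹ : ℝ) ^ K w)
    (x : ℕ) (s : Finset ℕ) :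
    ∑ w ∈ s, (if x < w then (2⁻¹ : ℝ) ^ K w else 0) ≤ cKbar K x :=
  Summable.sum_le_tsum s (fun w _ => by positivity) <|
    hK.of_nonneg_of_le (fun w => by positivity) fun w => by split_ifs <;> simp

theorem inv_two_pow_two_mul_log_le (i : ℕ) :
    (2⁻¹ : ℝ) ^ (2 * Nat.log 2 (i + 1) + 2) ≤ 1 / ((i : ℝ) + 1) - 1 / ((i : ℝ) + 2) := by
  have h : i + 2 ≤ 2 * 2 ^ Nat.log 2 (i + 1) := by
    have := Nat.lt_pow_succ_log_self one_lt_two (i + 1)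
    rw [pow_succ] at this
    omega
  have h' : ((i : ℝ) + 2) ≤ 2 * 2 ^ Nat.log 2 (i + 1) := by exact_mod_cast h
  rw [inv_pow, div_sub_div _ _ (by positivity) (by positivity), pow_add, pow_mul']
  field_simp
  nlinarith

theorem le_inv_two_pow_two_mul_log (i : ℕ) :
    1 / (4 * ((i : ℝ) + 1) ^ 2) ≤ (2⁻¹ : ℝ) ^ (2 * Nat.log 2 (i + 1) + 2) := by
  have h : ((2 : ℝ) ^ Nat.log 2 (i + 1)) ≤ i + 1 := by
    exact_mod_cast Nat.pow_log_le_self 2 (Nat.succ_ne_zero i)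
  rw [inv_pow, pow_add, pow_mul']
  field_simp
  nlinarith [pow_le_pow_left₀ (by positivity) h 2]

theorem sum_inv_two_pow_two_mul_log_le_one (F : Finset ℕ) :
    ∑ i ∈ F, (2⁻¹ : ℝ) ^ (2 * Nat.log 2 (i + 1) + 2) ≤ 1 := by
  obtain ⟨n, hn⟩ := F.exists_nat_subset_range
  calc ∑ i ∈ F, (2⁻¹ : ℝ) ^ (2 * Nat.log 2 (i + 1) + 2)
      ≤ ∑ i ∈ range n, (2⁻¹ : ℝ) ^ (2 * Nat.log 2 (i + 1) + 2) :=
        sum_le_sum_of_subset_of_nonneg hn fun _ _ _ => by positivity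
    _ ≤ ∑ i ∈ range n, (1 / ((i : ℝ) + 1) - 1 / ((i + 1 : ℕ) + 1)) :=
        sum_le_sum fun i _ => by
          push_cast
          rw [add_assoc, one_add_one_eq_two]
          exact inv_two_pow_two_mul_log_le i
    _ = 1 - 1 / ((n : ℝ) + 1) := by rw [sum_range_sub']; simp
    _ ≤ 1 := sub_le_self 1 (by positivity)

theorem tendsto_sum_range_natCast_div_succ_sq :
    Tendsto (fun N => ∑ i ∈ range N, (i : ℝ) / (i + 1) ^ 2) atTop atTop := by
  rw [← not_summable_iff_tendsto_nat_atTop_of_nonneg fun i => by positivity]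
  intro h
  have hsq : Summable fun i : ℕ => 1 / ((i : ℝ) + 1) ^ 2 := by
    exact_mod_cast (summable_nat_add_iff 1).2 (Real.summable_one_div_nat_pow.2 one_lt_two)
  refine Real.not_summable_one_div_natCast ((summable_nat_add_iff 1).1 ?_)
  refine (h.add hsq).congr fun i => ?_
  push_cast
  field_simp

theorem exists_div_sq_le_inv_two_pow_K {K : ℕ → ℕ}
    (hKC : ∀ L : ℕ → ℕ × ℕ, Computable L →
      (∀ F : Finset ℕ, ∑ i ∈ F, ((2 : ℝ)⁻¹) ^ (L i).1 ≤ 1) →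
      ∃ d, ∀ i, K (L i).2 ≤ (L i).1 + d)
    {f : ℕ → ℕ} (hf : Computable f) :
    ∃ c : ℝ, 0 < c ∧ ∀ i : ℕ, c / ((i : ℝ) + 1) ^ 2 ≤ (2⁻¹ : ℝ) ^ K (f i) := by
  have hlog : Computable fun i => 2 * Nat.log 2 (i + 1) + 2 :=
    (Primrec.nat_add.comp (Primrec.nat_mul.comp (Primrec.const 2)
      (Primrec.nat_log.comp (Primrec.const 2) Primrec.succ)) (Primrec.const 2)).to_comp
  obtain ⟨d, hd⟩ := hKC _ (hlog.pair hf) sum_inv_two_pow_two_mul_log_le_one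
  refine ⟨(2⁻¹ : ℝ) ^ d / 4, by positivity, fun i => ?_⟩
  calc (2⁻¹ : ℝ) ^ d / 4 / ((i : ℝ) + 1) ^ 2
      = (2⁻¹ : ℝ) ^ d * (1 / (4 * ((i : ℝ) + 1) ^ 2)) := by rw [div_div, mul_one_div]
    _ ≤ (2⁻¹ : ℝ) ^ d * (2⁻¹ : ℝ) ^ (2 * Nat.log 2 (i + 1) + 2) := by
        gcongr
        exact le_inv_two_pow_two_mul_log i
    _ = (2⁻¹ : ℝ) ^ (2 * Nat.log 2 (i + 1) + 2 + d) := by ring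
    _ ≤ (2⁻¹ : ℝ) ^ K (f i) := pow_le_pow_of_le_one (by norm_num) (by norm_num) (hd i)

theorem sum_nsmul_le_sum_cKbar_image {K : ℕ → ℕ} (hK : Summable fun w => (2⁻¹ : ℝ) ^ K w)
    {f : ℕ → ℕ} (hinj : Function.Injective f) {u : ℕ → ℝ} (hu : Antitone u)
    (huK : ∀ i, u i ≤ (2⁻¹ : ℝ) ^ K (f i)) (N : ℕ) :
    ∑ i ∈ range N, i • u i ≤ ∑ x ∈ (range N).image f, cKbar K x := by
  rw [sum_image hinj.injOn]
  refine (sum_nsmul_le_sum_sum_ite_lt hinj hu huK N).trans (sum_le_sum fun j _ => ?_)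
  simpa only [sum_image hinj.injOn] using sum_ite_lt_le_cKbar hK (f j) ((range N).image f)

/-- If `A` is an infinite c.e. set (the range of a computable
injection `f`), then `Σ_{x ∈ A} c̲_K(x) = ∞`: the finite partial sums over
subsets of `A` are unbounded.  Here `K` is prefix-free complexity, abstractly
given with the Kraft inequality and the Machine Existence (Kraft–Chaitin)
theorem as hypotheses. -/
theorem stmt6 (K : ℕ → ℕ)
    (hKraft : ∀ F : Finset ℕ, ∑ w ∈ F, ((2 : ℝ)⁻¹) ^ K w ≤ 1)
    (hKC : ∀ L : ℕ → ℕ × ℕ, Computable L →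
      (∀ F : Finset ℕ, ∑ i ∈ F, ((2 : ℝ)⁻¹) ^ (L i).1 ≤ 1) →
      ∃ d, ∀ i, K (L i).2 ≤ (L i).1 + d)
    (f : ℕ → ℕ) (hf : Computable f) (hinj : Function.Injective f) :
    ∀ q : ℝ, ∃ F : Finset ℕ, (∀ x ∈ F, x ∈ Set.range f) ∧
      q < ∑ x ∈ F, cKbar K x := by
  intro q
  have hK : Summable fun w => (2⁻¹ : ℝ) ^ K w :=
    summable_of_sum_range_le (fun w => by positivity) fun n => hKraft (range n)
  obtain ⟨c, hc, hcK⟩ := exists_div_sq_le_inv_two_pow_K hKC hf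
  obtain ⟨N, hN⟩ :=
    ((tendsto_sum_range_natCast_div_succ_sq.const_mul_atTop hc).eventually_gt_atTop q).exists
  have hu : Antitone fun i : ℕ => c / ((i : ℝ) + 1) ^ 2 := fun i j hij => by
    dsimp only
    gcongr
  refine ⟨(range N).image f, fun x hx => ?_, hN.trans_le ?_⟩
  · obtain ⟨i, -, rfl⟩ := mem_image.1 hx
    exact Set.mem_range_self i
  · calc c * ∑ i ∈ range N, (i : ℝ) / (i + 1) ^ 2
        = ∑ i ∈ range N, i • (c / ((i : ℝ) + 1) ^ 2) := by
          rw [mul_sum]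
          exact sum_congr rfl fun i _ => by rw [nsmul_eq_mul]; ring
      _ ≤ _ := sum_nsmul_le_sum_cKbar_image hK hinj hu hcK N
end

section
/- Let c be a monotonic cost function. If A obeys c and B obeys c, then A ⊕ B obeys c, where A ⊕ B = {2x : x ∈ A} ∪ {2x+1 : x ∈ B}. -/
/-- A cost function: computable and nonnegative. -/
def IsCostFunction (c : ℕ → ℕ → ℚ) : Prop :=
  Computable₂ c ∧ ∀ x s, 0 ≤ c x s

/-- The cost of the change from stage `s-1` to stage `s`: `c x s` for the least
`x < s` that changes, and `0` if there is no such `x`. -/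
def stageCost (c : ℕ → ℕ → ℚ) (A : ℕ → ℕ → Bool) (s : ℕ) : ℚ :=
  if h : ∃ x, x < s ∧ A (s - 1) x ≠ A s x then c (Nat.find h) s else 0

/-- `A` is a computable approximation of the set `L`: a computable sequence of
finite sets converging pointwise to `L`. -/
def IsCompApprox (A : ℕ → ℕ → Bool) (L : ℕ → Bool) : Prop :=
  Computable₂ A ∧ (∀ s, Set.Finite {x | A s x = true}) ∧
    ∀ x, ∃ N, ∀ s, N ≤ s → A s x = L x

/-- The total cost of the approximation `A` is bounded by `q`. -/
def ObeysWith (c : ℕ → ℕ → ℚ) (A : ℕ → ℕ → Bool) (q : ℚ) : Prop :=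
  ∀ n, ∑ s ∈ Finset.range n, stageCost c A s ≤ q

/-- A (Δ⁰₂) set `L` obeys the cost function `c`. -/
def Obeys (c : ℕ → ℕ → ℚ) (L : ℕ → Bool) : Prop :=
  ∃ A, IsCompApprox A L ∧ ∃ q, ObeysWith c A q

/-- Monotonic: non-increasing in the main argument, zero for `x > s`,
non-decreasing in the stage. -/
def MonotonicCF (c : ℕ → ℕ → ℚ) : Prop :=
  (∀ x s, c (x + 1) s ≤ c x s) ∧ (∀ x s, s < x → c x s = 0) ∧
    ∀ x s, c x s ≤ c x (s + 1)

/-- The limit condition: `lim_x liminf_s c(x,s) = 0`. -/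
def LimitCondition (c : ℕ → ℕ → ℚ) : Prop :=
  ∀ e : ℕ, ∃ x0, ∀ x, x0 ≤ x → ∀ t, ∃ s, t ≤ s ∧ c x s ≤ ((2 : ℚ) ^ e)⁻¹

/-- `L` is computably enumerable. -/
def CEset (L : ℕ → Bool) : Prop :=
  ∃ f : ℕ →. Unit, Partrec f ∧ ∀ x, (f x).Dom ↔ L x = true

/-- The join `A ⊕ B`. -/
def join (A B : ℕ → Bool) : ℕ → Bool :=
  fun n => if n % 2 = 0 then A (n / 2) else B (n / 2)

lemma MonotonicCF.antitone {c : ℕ → ℕ → ℚ} (hm : MonotonicCF c) (s : ℕ) :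
    Antitone (c · s) :=
  antitone_nat_of_succ_le fun x => hm.1 x s

lemma join_ne_join {a b a' b' : ℕ → Bool} {n : ℕ} (h : join a b n ≠ join a' b' n) :
    a (n / 2) ≠ a' (n / 2) ∨ b (n / 2) ≠ b' (n / 2) := by
  unfold join at h
  split_ifs at h
  exacts [.inl h, .inr h]

lemma Computable₂.join {A B : ℕ → ℕ → Bool} (hA : Computable₂ A) (hB : Computable₂ B) :
    Computable₂ fun s => join (A s) (B s) := by
  have hhalf : Computable fun p : ℕ × ℕ => p.2 / 2 :=
    (Primrec.nat_div.comp Primrec.snd (Primrec.const 2)).to_comp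
  have heven : Computable fun p : ℕ × ℕ => decide (p.2 % 2 = 0) :=
    (Primrec.eq.comp (Primrec.nat_mod.comp Primrec.snd (Primrec.const 2))
      (Primrec.const 0)).decide.to_comp
  refine (Computable.cond heven (hA.comp Computable.fst hhalf)
    (hB.comp Computable.fst hhalf)).of_eq fun p => ?_
  by_cases h : p.2 % 2 = 0 <;> simp [_root_.join, h]

lemma finite_setOf_join {a b : ℕ → Bool} (ha : {x | a x = true}.Finite)
    (hb : {x | b x = true}.Finite) : {n | join a b n = true}.Finite := by
  refine ((ha.image (2 * ·)).union (hb.image (2 * · + 1))).subset fun n hn => ?_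
  by_cases h : n % 2 = 0
  · exact .inl ⟨n / 2, by simpa [join, h] using hn, by dsimp only; omega⟩
  · exact .inr ⟨n / 2, by simpa [join, h] using hn, by dsimp only; omega⟩

lemma IsCompApprox.join {A B : ℕ → ℕ → Bool} {L M : ℕ → Bool} (hA : IsCompApprox A L)
    (hB : IsCompApprox B M) : IsCompApprox (fun s => join (A s) (B s)) (join L M) := by
  refine ⟨hA.1.join hB.1, fun s => finite_setOf_join (hA.2.1 s) (hB.2.1 s), fun n => ?_⟩
  obtain ⟨NA, hNA⟩ := hA.2.2 (n / 2)
  obtain ⟨NB, hNB⟩ := hB.2.2 (n / 2)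
  refine ⟨max NA NB, fun s hs => ?_⟩
  simp only [_root_.join, hNA s (le_of_max_le_left hs), hNB s (le_of_max_le_right hs)]

section stageCost

variable {c : ℕ → ℕ → ℚ}

lemma stageCost_nonneg (hc : ∀ x s, 0 ≤ c x s) (A : ℕ → ℕ → Bool) (s : ℕ) :
    0 ≤ stageCost c A s := by
  unfold stageCost
  split
  · exact hc _ _
  · exact le_rfl

lemma le_stageCost_of_ne {s x : ℕ} (hc : Antitone (c · s)) {A : ℕ → ℕ → Bool} (hxs : x < s)
    (hx : A (s - 1) x ≠ A s x) : c x s ≤ stageCost c A s := by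
  have h : ∃ y, y < s ∧ A (s - 1) y ≠ A s y := ⟨x, hxs, hx⟩
  rw [stageCost, dif_pos h]
  exact hc (Nat.find_min' h ⟨hxs, hx⟩)

/-- The least change of `A ⊕ B` at `n` comes from a change at `n / 2 ≤ n` in `A` or `B`,
which costs at least as much since `c` is antitone in `x`. -/
lemma stageCost_join_le (hc : ∀ x s, 0 ≤ c x s) (hanti : ∀ s, Antitone (c · s))
    (A B : ℕ → ℕ → Bool) (s : ℕ) :
    stageCost c (fun t => join (A t) (B t)) s ≤ stageCost c A s + stageCost c B s := by
  have hA := stageCost_nonneg hc A s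
  have hB := stageCost_nonneg hc B s
  rw [stageCost]
  split_ifs with h
  · obtain ⟨hlt, hne⟩ := Nat.find_spec h
    have hhalf : c (Nat.find h) s ≤ c (Nat.find h / 2) s := hanti s (Nat.div_le_self _ 2)
    have hlt' : Nat.find h / 2 < s := (Nat.div_le_self _ 2).trans_lt hlt
    rcases join_ne_join hne with hA' | hB'
    · linarith [le_stageCost_of_ne (hanti s) hlt' hA']
    · linarith [le_stageCost_of_ne (hanti s) hlt' hB']
  · exact add_nonneg hA hB

lemma ObeysWith.join (hc : ∀ x s, 0 ≤ c x s) (hanti : ∀ s, Antitone (c · s))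
    {A B : ℕ → ℕ → Bool} {qA qB : ℚ} (hA : ObeysWith c A qA) (hB : ObeysWith c B qB) :
    ObeysWith c (fun s => _root_.join (A s) (B s)) (qA + qB) := fun n =>
  calc ∑ s ∈ Finset.range n, stageCost c (fun t => _root_.join (A t) (B t)) s
      ≤ ∑ s ∈ Finset.range n, (stageCost c A s + stageCost c B s) :=
        Finset.sum_le_sum fun s _ => stageCost_join_le hc hanti A B s
    _ = (∑ s ∈ Finset.range n, stageCost c A s) + ∑ s ∈ Finset.range n, stageCost c B s :=
        Finset.sum_add_distrib
    _ ≤ qA + qB := add_le_add (hA n) (hB n)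

end stageCost

/-- If `A` and `B` obey a monotonic cost function `c`, then so
does `A ⊕ B`. -/
theorem stmt9 (c : ℕ → ℕ → ℚ) (hc : IsCostFunction c) (hm : MonotonicCF c)
    (A B : ℕ → Bool) (hA : Obeys c A) (hB : Obeys c B) :
    Obeys c (join A B) := by
  obtain ⟨A', hA', qA, hqA⟩ := hA
  obtain ⟨B', hB', qB, hqB⟩ := hB
  exact ⟨_, hA'.join hB', qA + qB, hqA.join hc.2 hm.antitone hqB⟩
end
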